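/- arXiv:1911.11998 — 6 statements merged into one kernel-verified Lean document; each statement's English description precedes it below -/
import Mathlib

section
/- Let (M_n) be a logarithmically convex sequence of positive reals with M_0 = 1 and of moderate growth. Then there exists C > 0 such that for all d, n, a ∈ ℕ with a ≤ dn, M_{dn-a} / M_{dn} ≤ C^a (M_{n-1}/M_n)^a. -/
/-!
Write `ρ j = M (j + 1) / M j`; log-convexity says `ρ` is nondecreasing, so `M m * ρ t ^ k ≤ M (m + k)`
whenever `t ≤ m`. Applied with `m = k` and combined with moderate growth this gives
`ρ n ^ k ≤ B ^ (2k) * M k` for `k ≥ n`. Since also `M m ^ k ≤ M k ^ m` for `m ≤ k` (the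
discrete form of the monotonicity of `M_k ^ (1/k)`), for `k = m + a > n` we get
`(M m * ρ n ^ a) ^ k ≤ M k ^ m * (B ^ (2k) * M k) ^ a = (B ^ (2a) * M k) ^ k`,
which is the claim with `C = B ^ 2`, `k = d n` and `m = d n - a`.
-/

namespace LogConvexSeq

noncomputable def ratio (M : ℕ → ℝ) (j : ℕ) : ℝ := M (j + 1) / M j

variable {M : ℕ → ℝ} (hpos : ∀ n, 0 < M n)
include hpos

theorem ratio_pos (j : ℕ) : 0 < ratio M j := div_pos (hpos _) (hpos _)

theorem mul_ratio (j : ℕ) : M j * ratio M j = M (j + 1) :=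
  mul_div_cancel₀ _ (hpos j).ne'

variable (hlc : ∀ n ≥ 1, (M n) ^ 2 ≤ M (n - 1) * M (n + 1))
include hlc

theorem ratio_monotone : Monotone (ratio M) := by
  refine monotone_nat_of_le_succ fun j => ?_
  have h := hlc (j + 1) (by omega)
  simp only [Nat.add_sub_cancel] at h
  rw [ratio, ratio, div_le_div_iff₀ (hpos j) (hpos (j + 1))]
  nlinarith

theorem mul_ratio_pow_le {t m : ℕ} (htm : t ≤ m) (k : ℕ) :
    M m * ratio M t ^ k ≤ M (m + k) := by
  induction k with
  | zero => simp
  | succ k ih =>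
    calc M m * ratio M t ^ (k + 1) = M m * ratio M t ^ k * ratio M t := by ring
      _ ≤ M (m + k) * ratio M (m + k) :=
          mul_le_mul ih (ratio_monotone hpos hlc (by omega)) (ratio_pos hpos t).le (hpos _).le
      _ = M (m + k + 1) := mul_ratio hpos _

theorem le_ratio_pow (h0 : M 0 = 1) (s : ℕ) : M s ≤ ratio M s ^ s := by
  induction s with
  | zero => simp [h0]
  | succ s ih =>
    calc M (s + 1) = M s * ratio M s := (mul_ratio hpos s).symm
      _ ≤ ratio M s ^ s * ratio M s := mul_le_mul_of_nonneg_right ih (ratio_pos hpos s).le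
      _ = ratio M s ^ (s + 1) := by ring
      _ ≤ ratio M (s + 1) ^ (s + 1) :=
          pow_le_pow_left₀ (ratio_pos hpos s).le (ratio_monotone hpos hlc (Nat.le_succ s)) _

theorem pow_le_pow_comm_of_le (h0 : M 0 = 1) {s k : ℕ} (hsk : s ≤ k) : M s ^ k ≤ M k ^ s := by
  obtain ⟨j, rfl⟩ := Nat.exists_eq_add_of_le hsk
  calc M s ^ (s + j) = M s ^ s * M s ^ j := pow_add _ _ _
    _ ≤ M s ^ s * (ratio M s ^ s) ^ j := by
        have := hpos s
        gcongr
        exact le_ratio_pow hpos hlc h0 s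
    _ = (M s * ratio M s ^ j) ^ s := by ring
    _ ≤ M (s + j) ^ s :=
        pow_le_pow_left₀ (mul_pos (hpos s) (pow_pos (ratio_pos hpos s) j)).le
          (mul_ratio_pow_le hpos hlc le_rfl j) _

variable {B : ℝ} (hmg : ∀ n k : ℕ, M (n + k) ≤ B ^ (n + k) * M n * M k)
include hmg

theorem ratio_pow_le {n k : ℕ} (hnk : n ≤ k) : ratio M n ^ k ≤ (B ^ 2) ^ k * M k := by
  have h := (mul_ratio_pow_le hpos hlc hnk k).trans (hmg k k)
  rw [← pow_mul, two_mul]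
  exact le_of_mul_le_mul_left (h.trans_eq (by ring)) (hpos k)

theorem mul_ratio_pow_le_of_lt (h0 : M 0 = 1) {n m a : ℕ} (hn : n < m + a) :
    M m * ratio M n ^ a ≤ (B ^ 2) ^ a * M (m + a) := by
  set k := m + a
  refine le_of_pow_le_pow_left₀ (n := k) (by omega) (by have := hpos k; positivity) ?_
  calc (M m * ratio M n ^ a) ^ k = M m ^ k * (ratio M n ^ k) ^ a := by ring
    _ ≤ M k ^ m * ((B ^ 2) ^ k * M k) ^ a := by
        have := ratio_pos hpos n
        exact mul_le_mul (pow_le_pow_comm_of_le hpos hlc h0 (by omega))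
          (pow_le_pow_left₀ (by positivity) (ratio_pow_le hpos hlc hmg hn.le) a)
          (by positivity) (pow_nonneg (hpos k).le m)
    _ = ((B ^ 2) ^ a * M k) ^ k := by rw [mul_pow, ← pow_mul, ← pow_mul]; ring

end LogConvexSeq

open LogConvexSeq in
theorem stmt_7 (M : ℕ → ℝ) (hpos : ∀ n, 0 < M n) (h0 : M 0 = 1)
    (hlc : ∀ n ≥ 1, (M n) ^ 2 ≤ M (n - 1) * M (n + 1))
    (B : ℝ) (hB : 0 < B)
    (hmg : ∀ n k : ℕ, M (n + k) ≤ B ^ (n + k) * M n * M k) :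
    ∃ C > 0, ∀ d n a : ℕ, 1 ≤ d → 1 ≤ n → a ≤ d * n →
      M (d * n - a) / M (d * n) ≤ C ^ a * (M (n - 1) / M n) ^ a := by
  refine ⟨B ^ 2, by positivity, fun d n a hd hn ha => ?_⟩
  obtain ⟨n, rfl⟩ := Nat.exists_eq_add_of_le' hn
  have hdn : d * (n + 1) - a + a = d * (n + 1) := Nat.sub_add_cancel ha
  have key := mul_ratio_pow_le_of_lt hpos hlc hmg h0 (n := n) (m := d * (n + 1) - a) (a := a)
    (by rw [hdn]; nlinarith)
  rw [hdn] at key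
  have hρ := ratio_pos hpos n
  rw [Nat.add_sub_cancel, div_le_iff₀ (hpos _), ← inv_div, ← ratio, inv_pow]
  calc M (d * (n + 1) - a) ≤ (B ^ 2) ^ a * M (d * (n + 1)) / ratio M n ^ a :=
        (le_div_iff₀ (by positivity)).2 key
    _ = _ := by ring
end

section
/- Let (M_n) be a sequence of positive reals with M_0 = 1 of moderate growth and satisfying (⋆). Then for all p, q ∈ ℕ with q ≥ 1 there exist constants C, D > 0 such that M_{⌊np/q⌋} ≤ C D^n (M_n)^{p/q} for every n ∈ ℕ₀. -/
theorem stmt_8 (M : ℕ → ℝ) (hpos : ∀ n, 0 < M n) (h0 : M 0 = 1)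
    (B : ℝ) (hB : 0 < B)
    (hmg : ∀ n k : ℕ, M (n + k) ≤ B ^ (n + k) * M n * M k)
    (b : ℝ) (hb : 0 < b)
    (hstar : ∀ n k : ℕ, b ^ (n + k) * M n * M k ≤ M (n + k)) :
    ∀ p q : ℕ, 1 ≤ q → ∃ C > 0, ∃ D > 0, ∀ n : ℕ,
      M (n * p / q) ≤ C * D ^ n * (M n) ^ ((p : ℝ) / q) := by
  intro p q hq
  set B1 := max B 1 with hB1def
  have hB1 : (1:ℝ) ≤ B1 := le_max_right _ _
  have hB1pos : (0:ℝ) < B1 := lt_of_lt_of_le one_pos hB1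
  set b1 := min b 1 with hb1def
  have hb1pos : (0:ℝ) < b1 := lt_min hb one_pos
  have hb1le1 : b1 ≤ 1 := min_le_right _ _
  have hb1leb : b1 ≤ b := min_le_left _ _
  -- iterated moderate growth
  have mg2 : ∀ j n : ℕ, M (j * n) ≤ B1 ^ (j * j * n) * M n ^ j := by
    intro j n
    induction j with
    | zero => simp [h0]
    | succ j ih =>
      have h1 : M ((j+1) * n) ≤ B ^ (j * n + n) * M (j * n) * M n := by
        have := hmg (j * n) n
        simpa [Nat.succ_mul] using this
      have hBle : B ^ (j*n+n) ≤ B1 ^ (j*n+n) := pow_le_pow_left₀ hB.le (le_max_left _ _) _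
      have h2 : B ^ (j*n+n) * M (j*n) * M n ≤ B1 ^ (j*n+n) * (B1 ^ (j*j*n) * M n ^ j) * M n := by
        apply mul_le_mul_of_nonneg_right _ (hpos n).le
        exact mul_le_mul hBle ih (hpos (j*n)).le (pow_pos hB1pos _).le
      have he : (j*n+n) + j*j*n ≤ (j+1)*(j+1)*n := by nlinarith
      have h3 : B1 ^ (j*n+n) * (B1 ^ (j*j*n) * M n ^ j) * M n ≤ B1 ^ ((j+1)*(j+1)*n) * M n ^ (j+1) := by
        have hp : B1 ^ ((j*n+n) + j*j*n) ≤ B1 ^ ((j+1)*(j+1)*n) := pow_le_pow_right₀ hB1 he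
        calc B1 ^ (j*n+n) * (B1 ^ (j*j*n) * M n ^ j) * M n
            = B1 ^ ((j*n+n) + (j*j*n)) * M n ^ (j+1) := by rw [pow_add, pow_succ]; ring
          _ ≤ _ := mul_le_mul_of_nonneg_right hp (pow_nonneg (hpos n).le _)
      linarith
  -- iterated star
  have star2 : ∀ j s : ℕ, b1 ^ (j * j * s) * M s ^ j ≤ M (j * s) := by
    intro j s
    induction j with
    | zero => simp [h0]
    | succ j ih =>
      have h1 : b ^ (j * s + s) * M (j * s) * M s ≤ M ((j+1) * s) := by
        have := hstar (j * s) s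
        simpa [Nat.succ_mul] using this
      have hble : b1 ^ (j*s+s) ≤ b ^ (j*s+s) := pow_le_pow_left₀ hb1pos.le hb1leb _
      have he : (j*s+s) + j*j*s ≤ (j+1)*(j+1)*s := by nlinarith
      have hp : b1 ^ ((j+1)*(j+1)*s) ≤ b1 ^ ((j*s+s) + j*j*s) :=
        pow_le_pow_of_le_one hb1pos.le hb1le1 he
      have h2 : b1 ^ ((j+1)*(j+1)*s) * M s ^ (j+1)
          ≤ b1 ^ (j*s+s) * (b1 ^ (j*j*s) * M s ^ j) * M s := by
        calc b1 ^ ((j+1)*(j+1)*s) * M s ^ (j+1)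
            ≤ b1 ^ ((j*s+s) + j*j*s) * M s ^ (j+1) :=
              mul_le_mul_of_nonneg_right hp (pow_nonneg (hpos s).le _)
          _ = b1 ^ (j*s+s) * (b1 ^ (j*j*s) * M s ^ j) * M s := by rw [pow_add, pow_succ]; ring
      have h3 : b1 ^ (j*s+s) * (b1 ^ (j*j*s) * M s ^ j) * M s ≤ b ^ (j*s+s) * M (j*s) * M s := by
        apply mul_le_mul_of_nonneg_right _ (hpos s).le
        exact mul_le_mul hble ih (mul_pos (pow_pos hb1pos _) (pow_pos (hpos s) j)).le (pow_pos hb _).le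
      linarith
  have hq0 : 0 < q := hq
  -- lower bound on M r for r < q
  have hne : (Finset.range q).Nonempty := ⟨0, Finset.mem_range.mpr hq0⟩
  set c := (Finset.range q).inf' hne M with hc
  have hcpos : 0 < c := by
    rw [hc, Finset.lt_inf'_iff]
    intro i _; exact hpos i
  set K := q * p + q * q * p + q with hK
  set C0 := (b1 ^ K * c)⁻¹ with hC0
  set D0 := B1 ^ (p*p) * (b1 ^ K)⁻¹ with hD0
  have hC0pos : 0 < C0 := inv_pos.mpr (mul_pos (pow_pos hb1pos K) hcpos)
  have hD0pos : 0 < D0 := by positivity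
  -- the polynomial-form key inequality
  have key : ∀ n : ℕ, M (n * p / q) ^ q ≤ C0 * D0 ^ n * M n ^ p := by
    intro n
    set s := n * p / q with hs
    set r := n * p % q with hr
    have hqs : q * s + r = n * p := Nat.div_add_mod (n*p) q
    have hrq : r < q := Nat.mod_lt _ hq0
    have hsle : s ≤ n * p := Nat.div_le_self _ _
    have h1 : b1 ^ (q * q * s) * M s ^ q ≤ M (q * s) := star2 q s
    have h2 : b ^ (q * s + r) * M (q * s) * M r ≤ M (n * p) := by
      rw [← hqs]; exact hstar (q * s) r
    have h4 : M (n * p) ≤ B1 ^ (p * p * n) * M n ^ p := by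
      have := mg2 p n
      rwa [Nat.mul_comm p n, Nat.mul_comm (p*p) n, Nat.mul_comm n (p*p)] at this
    have hcr : c ≤ M r := Finset.inf'_le _ (Finset.mem_range.mpr hrq)
    -- combine: b1^E * c * M s ^ q ≤ B1^(p*p*n) * M n ^ p, E = (q*s+r) + q*q*s
    have hE : b1 ^ ((q*s+r) + q*q*s) * c * M s ^ q ≤ B1 ^ (p*p*n) * M n ^ p := by
      have hA : b1 ^ (q*s+r) * c * (b1 ^ (q*q*s) * M s ^ q)
          ≤ b1 ^ (q*s+r) * M r * M (q*s) := by
        have h1' : b1 ^ (q*q*s) * M s ^ q * c ≤ M (q*s) * M r :=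
          mul_le_mul h1 hcr hcpos.le (hpos (q*s)).le
        have hbp : (0:ℝ) ≤ b1 ^ (q*s+r) := by positivity
        nlinarith [mul_le_mul_of_nonneg_left h1' hbp]
      have hB2 : b1 ^ (q*s+r) * M r * M (q*s) ≤ b ^ (q*s+r) * M (q*s) * M r := by
        have := mul_le_mul_of_nonneg_right (mul_le_mul_of_nonneg_right
          (pow_le_pow_left₀ hb1pos.le hb1leb (q*s+r)) (hpos r).le) (hpos (q*s)).le
        nlinarith [this]
      calc b1 ^ ((q*s+r) + q*q*s) * c * M s ^ q
          = b1 ^ (q*s+r) * c * (b1 ^ (q*q*s) * M s ^ q) := by rw [pow_add]; ring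
        _ ≤ b1 ^ (q*s+r) * M r * M (q*s) := hA
        _ ≤ b ^ (q*s+r) * M (q*s) * M r := hB2
        _ ≤ M (n * p) := h2
        _ ≤ B1 ^ (p*p*n) * M n ^ p := h4
    have hEle : (q*s+r) + q*q*s ≤ K * (n+1) := by
      have h1 : q * s ≤ q * (n * p) := Nat.mul_le_mul_left _ hsle
      have h2 : q * q * s ≤ q * q * (n * p) := Nat.mul_le_mul_left _ hsle
      have : r ≤ q := hrq.le
      calc (q*s+r) + q*q*s ≤ q*(n*p) + q + q*q*(n*p) := by omega
        _ ≤ K * (n+1) := by rw [hK]; ring_nf; nlinarith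
    have hEb : b1 ^ (K * (n+1)) ≤ b1 ^ ((q*s+r) + q*q*s) :=
      pow_le_pow_of_le_one hb1pos.le hb1le1 hEle
    have hfinal : b1 ^ (K * (n+1)) * c * M s ^ q ≤ B1 ^ (p*p*n) * M n ^ p := by
      have : b1 ^ (K * (n+1)) * c * M s ^ q ≤ b1 ^ ((q*s+r) + q*q*s) * c * M s ^ q := by
        apply mul_le_mul_of_nonneg_right (mul_le_mul_of_nonneg_right hEb hcpos.le) (pow_pos (hpos s) q).le
      linarith
    -- divide out
    have hdpos : (0:ℝ) < b1 ^ (K * (n+1)) * c := mul_pos (pow_pos hb1pos _) hcpos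
    have hdiv : M s ^ q ≤ (B1 ^ (p*p*n) * M n ^ p) / (b1 ^ (K * (n+1)) * c) := by
      rw [le_div_iff₀ hdpos]
      calc M s ^ q * (b1 ^ (K * (n+1)) * c) = b1 ^ (K * (n+1)) * c * M s ^ q := by ring
        _ ≤ _ := hfinal
    have heq : (B1 ^ (p*p*n) * M n ^ p) / (b1 ^ (K * (n+1)) * c) = C0 * D0 ^ n * M n ^ p := by
      have hb1K : b1 ^ K ≠ 0 := (pow_pos hb1pos K).ne'
      rw [hC0, hD0, pow_mul B1 (p*p) n, pow_mul b1 K (n+1)]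
      rw [div_eq_iff (by exact (mul_pos (pow_pos (pow_pos hb1pos K) (n+1)) hcpos).ne')]
      rw [mul_pow, pow_succ]
      field_simp
      ring_nf
      rw [mul_assoc, ← mul_pow, mul_inv_cancel₀ hb1pos.ne', one_pow, mul_one]
    rw [heq] at hdiv
    exact hdiv
  -- take q-th roots
  refine ⟨C0 ^ ((q:ℝ)⁻¹), Real.rpow_pos_of_pos hC0pos _, D0 ^ ((q:ℝ)⁻¹),
    Real.rpow_pos_of_pos hD0pos _, fun n => ?_⟩
  have hqR : ((q:ℝ)) ≠ 0 := Nat.cast_ne_zero.mpr hq0.ne'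
  set s := n * p / q with hs
  have hMs : M s = (M s ^ q) ^ ((q:ℝ)⁻¹) := by
    rw [← Real.rpow_natCast (M s) q, ← Real.rpow_mul (hpos s).le,
      mul_inv_cancel₀ hqR, Real.rpow_one]
  have hmono := Real.rpow_le_rpow (pow_pos (hpos s) q).le (key n)
    (by positivity : (0:ℝ) ≤ (q:ℝ)⁻¹)
  rw [← hMs] at hmono
  refine hmono.trans_eq ?_
  rw [Real.mul_rpow (mul_pos hC0pos (pow_pos hD0pos n)).le (pow_pos (hpos n) p).le,
    Real.mul_rpow hC0pos.le (pow_pos hD0pos n).le]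
  congr 1
  · congr 1
    rw [← Real.rpow_natCast D0 n, ← Real.rpow_mul hD0pos.le, mul_comm,
      Real.rpow_mul hD0pos.le, Real.rpow_natCast]
  · rw [← Real.rpow_natCast (M n) p, ← Real.rpow_mul (hpos n).le, div_eq_mul_inv]
end

section
/- Let (M_n) be a sequence of positive reals with M_0 = 1 of moderate growth and satisfying (⋆). Then for all p, q ∈ ℕ with q ≥ 1 there exist constants C, D > 0 such that (M_n)^{p/q} ≤ C D^n M_{⌊np/q⌋} for every n ∈ ℕ₀. -/
/-!
Property (⋆) says that `n ↦ (M n)⁻¹` has moderate growth, so iterating the two inequalities gives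
`M n ^ p ≤ A ^ O(n) * M (p * n)` and `M (q * m) ≤ A ^ O(m) * M m ^ q`. Writing `n * p = q * m + r`
with `m = ⌊n p / q⌋` and `r < q`, moderate growth splits `M (q * m + r)` and `M r ≤ ∑ i < q, M i`,
so `M n ^ p ≤ K ^ n * R * M m ^ q`; taking `q`-th roots gives `C = R ^ (1/q)`, `D = K ^ (1/q)`.
-/

open Finset

/-- Moderate growth (mg) with constant `A`; property (⋆) with constant `b` is this property of
`n ↦ (M n)⁻¹` with constant `b⁻¹`. -/
def QuasiSubmultiplicative (A : ℝ) (f : ℕ → ℝ) : Prop :=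
  ∀ n k, f (n + k) ≤ A ^ (n + k) * f n * f k

namespace QuasiSubmultiplicative

variable {A A' : ℝ} {f : ℕ → ℝ}

theorem mono (h : QuasiSubmultiplicative A f) (hA : 0 ≤ A) (hAA' : A ≤ A') (hf : ∀ n, 0 ≤ f n) :
    QuasiSubmultiplicative A' f := fun n k =>
  (h n k).trans <| by gcongr <;> simp [hf]

theorem inv_of_le_mul_mul {g : ℕ → ℝ} {b : ℝ} (hb : 0 < b) (hg : ∀ n, 0 < g n)
    (h : ∀ n k, b ^ (n + k) * g n * g k ≤ g (n + k)) :
    QuasiSubmultiplicative b⁻¹ fun n => (g n)⁻¹ := fun n k => by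
  rw [inv_pow, ← mul_inv, ← mul_inv]
  exact inv_anti₀ (by have := hg n; have := hg k; positivity) (h n k)

theorem apply_mul_le (h : QuasiSubmultiplicative A f) (hA : 1 ≤ A) (hf : ∀ n, 0 ≤ f n)
    (hf0 : f 0 ≤ 1) (n j : ℕ) : f (j * n) ≤ A ^ (j * j * n) * f n ^ j := by
  induction j with
  | zero => simpa using hf0
  | succ j ih =>
    have hexp : j * n + n + j * j * n ≤ (j + 1) * (j + 1) * n := by nlinarith
    calc f ((j + 1) * n) = f (j * n + n) := by rw [Nat.succ_mul]
      _ ≤ A ^ (j * n + n) * f (j * n) * f n := h _ _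
      _ ≤ A ^ (j * n + n) * (A ^ (j * j * n) * f n ^ j) * f n := by
          gcongr
          exact hf n
      _ = A ^ (j * n + n + j * j * n) * f n ^ (j + 1) := by ring
      _ ≤ A ^ ((j + 1) * (j + 1) * n) * f n ^ (j + 1) := by
          gcongr
          exact pow_nonneg (hf n) _

end QuasiSubmultiplicative

theorem pow_le_geom_mul_pow_div {M : ℕ → ℝ} {A : ℝ} (hM : ∀ n, 0 < M n) (h0 : M 0 = 1)
    (hA : 1 ≤ A) (hup : QuasiSubmultiplicative A M)
    (hlow : QuasiSubmultiplicative A fun n => (M n)⁻¹) (p q n : ℕ) (hq : 0 < q) :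
    M n ^ p ≤ (A ^ (p * p + p + q * q * p)) ^ n * (∑ i ∈ range q, M i) * M (n * p / q) ^ q := by
  set m := n * p / q
  set r := n * p % q
  have hdiv : q * m + r = p * n := by rw [Nat.div_add_mod, Nat.mul_comm]
  have hApos : 0 < A := zero_lt_one.trans_le hA
  have hM0 : ∀ n, 0 ≤ M n := fun n => (hM n).le
  have lower : M n ^ p ≤ A ^ (p * p * n) * M (p * n) := by
    have := hlow.apply_mul_le hA (fun n => (inv_pos.2 (hM n)).le) (by simp [h0]) n p
    rw [inv_pow, ← div_eq_mul_inv,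
      inv_le_comm₀ (hM _) (div_pos (pow_pos hApos _) (pow_pos (hM n) _)), inv_div,
      div_le_iff₀ (pow_pos hApos _)] at this
    linarith
  have hR : 0 ≤ ∑ i ∈ range q, M i := sum_nonneg fun i _ => hM0 i
  have hr : M r ≤ ∑ i ∈ range q, M i :=
    single_le_sum (fun i _ => hM0 i) (mem_range.2 (Nat.mod_lt _ hq))
  have upper : M (p * n) ≤ A ^ (p * n) * (A ^ (q * q * m) * M m ^ q) * ∑ i ∈ range q, M i := by
    rw [← hdiv]
    calc M (q * m + r) ≤ A ^ (q * m + r) * M (q * m) * M r := hup _ _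
      _ ≤ _ := by
          have hqm := hup.apply_mul_le hA hM0 h0.le m q
          have := hM0 m
          gcongr
          exact hM0 r
  have hexp : p * p * n + (p * n + q * q * m) ≤ (p * p + p + q * q * p) * n := by
    have hm : m ≤ p * n := (Nat.div_le_self _ _).trans_eq (Nat.mul_comm _ _)
    have : q * q * m ≤ q * q * (p * n) := Nat.mul_le_mul_left _ hm
    nlinarith
  calc M n ^ p ≤ A ^ (p * p * n) * M (p * n) := lower
    _ ≤ A ^ (p * p * n) * (A ^ (p * n) * (A ^ (q * q * m) * M m ^ q) * ∑ i ∈ range q, M i) := by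
        gcongr
    _ = A ^ (p * p * n + (p * n + q * q * m)) * (∑ i ∈ range q, M i) * M m ^ q := by ring
    _ ≤ (A ^ (p * p + p + q * q * p)) ^ n * (∑ i ∈ range q, M i) * M m ^ q := by
        rw [← pow_mul]
        gcongr
        exact pow_nonneg (hM0 _) _

theorem rpow_div_le_of_pow_le {x y K R : ℝ} {p q n : ℕ} (hx : 0 ≤ x) (hy : 0 ≤ y) (hK : 0 ≤ K)
    (hR : 0 ≤ R) (hq : q ≠ 0) (h : x ^ p ≤ K ^ n * R * y ^ q) :
    x ^ ((p : ℝ) / q) ≤ R ^ (q⁻¹ : ℝ) * (K ^ (q⁻¹ : ℝ)) ^ n * y := by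
  rw [← pow_le_pow_iff_left₀ (by positivity) (by positivity) hq, mul_pow, mul_pow,
    Real.rpow_inv_natCast_pow hR hq, ← pow_mul, mul_comm n, pow_mul,
    Real.rpow_inv_natCast_pow hK hq, ← Real.rpow_natCast, ← Real.rpow_mul hx,
    div_mul_cancel₀ _ (Nat.cast_ne_zero.2 hq), Real.rpow_natCast]
  linarith

theorem stmt_9 (M : ℕ → ℝ) (hpos : ∀ n, 0 < M n) (h0 : M 0 = 1)
    (B : ℝ) (hB : 0 < B)
    (hmg : ∀ n k : ℕ, M (n + k) ≤ B ^ (n + k) * M n * M k)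
    (b : ℝ) (hb : 0 < b)
    (hstar : ∀ n k : ℕ, b ^ (n + k) * M n * M k ≤ M (n + k)) :
    ∀ p q : ℕ, 1 ≤ q → ∃ C > 0, ∃ D > 0, ∀ n : ℕ,
      (M n) ^ ((p : ℝ) / q) ≤ C * D ^ n * M (n * p / q) := by
  intro p q hq
  set A := max (max B b⁻¹) 1
  have hA : 1 ≤ A := le_max_right _ _
  have hup : QuasiSubmultiplicative A M :=
    QuasiSubmultiplicative.mono hmg hB.le (le_max_of_le_left (le_max_left _ _))
      fun n => (hpos n).le
  have hlow : QuasiSubmultiplicative A fun n => (M n)⁻¹ :=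
    (QuasiSubmultiplicative.inv_of_le_mul_mul hb hpos hstar).mono (by positivity)
      (le_max_of_le_left (le_max_right _ _)) fun n => (inv_pos.2 (hpos n)).le
  have hR : 0 < ∑ i ∈ range q, M i := sum_pos (fun i _ => hpos i) (nonempty_range_iff.2 (by omega))
  have hK : 0 < A ^ (p * p + p + q * q * p) := by positivity
  refine ⟨_, Real.rpow_pos_of_pos hR (q⁻¹ : ℝ), _, Real.rpow_pos_of_pos hK (q⁻¹ : ℝ), fun n => ?_⟩
  exact rpow_div_le_of_pow_le (hpos n).le (hpos _).le hK.le hR.le (by omega)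
    (pow_le_geom_mul_pow_div hpos h0 hA hup hlow p q n hq)
end

section
/- The sequence M_n defined by M_n = n! if n is even and M_n = (n-1)! if n is odd satisfies property (⋆) (with some b > 0, M_{n+k} ≥ b^{n+k} M_n M_k for all n, k) and moderate growth (with some B > 0, M_{n+k} ≤ B^{n+k} M_n M_k for all n, k), but is not logarithmically convex. -/
/-!
The sequence is within a geometric factor of `n !`: `M n ≤ n ! ≤ 2 ^ n * M n`, since for odd `n`
the two differ by the factor `n ≤ 2 ^ n`. Both (⋆) and moderate growth are invariant under such
equivalences, and `n !` has them because `n ! * k ! ≤ (n + k)! ≤ 2 ^ (n + k) * n ! * k !`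
(binomial coefficients lie between `1` and `2 ^ (n + k)`). Log-convexity fails at `n = 2`, since
`M 1 = 1` and `M 2 = M 3 = 2`.
-/

open Nat

def StarProperty (M : ℕ → ℝ) : Prop :=
  ∃ b > 0, ∀ n k : ℕ, b ^ (n + k) * M n * M k ≤ M (n + k)

def ModerateGrowth (M : ℕ → ℝ) : Prop :=
  ∃ B > 0, ∀ n k : ℕ, M (n + k) ≤ B ^ (n + k) * M n * M k

def LogConvex (M : ℕ → ℝ) : Prop :=
  ∀ n ≥ 1, M n ^ 2 ≤ M (n - 1) * M (n + 1)

section Equivalence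

variable {M N : ℕ → ℝ} {A : ℝ}

theorem StarProperty.of_equiv (hA : 0 < A) (hM : ∀ m, 0 ≤ M m)
    (hMN : ∀ m, M m ≤ A ^ m * N m) (hNM : ∀ m, N m ≤ A ^ m * M m) (hN : StarProperty N) :
    StarProperty M := by
  obtain ⟨b, hb, hstar⟩ := hN
  refine ⟨b / A ^ 2, by positivity, fun n k => ?_⟩
  have hprod : M n * M k ≤ A ^ (n + k) * (N n * N k) := by
    calc M n * M k ≤ (A ^ n * N n) * (A ^ k * N k) :=
          mul_le_mul (hMN n) (hMN k) (hM k) ((hM n).trans (hMN n))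
      _ = A ^ (n + k) * (N n * N k) := by ring
  calc (b / A ^ 2) ^ (n + k) * M n * M k
      = (b / A ^ 2) ^ (n + k) * (M n * M k) := by ring
    _ ≤ (b / A ^ 2) ^ (n + k) * (A ^ (n + k) * (N n * N k)) := by gcongr
    _ = (A ^ (n + k))⁻¹ * (b ^ (n + k) * N n * N k) := by
          rw [div_pow]
          field_simp
          ring
    _ ≤ (A ^ (n + k))⁻¹ * N (n + k) := by gcongr; exact hstar n k
    _ ≤ M (n + k) := by
          rw [inv_mul_le_iff₀ (by positivity)]
          exact hNM (n + k)

theorem ModerateGrowth.of_equiv (hA : 0 < A) (hM : ∀ m, 0 ≤ M m)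
    (hMN : ∀ m, M m ≤ A ^ m * N m) (hNM : ∀ m, N m ≤ A ^ m * M m) (hN : ModerateGrowth N) :
    ModerateGrowth M := by
  obtain ⟨B, hB, hmg⟩ := hN
  have hN_nonneg : ∀ m, 0 ≤ N m := fun m =>
    nonneg_of_mul_nonneg_right ((hM m).trans (hMN m)) (by positivity)
  refine ⟨B * A ^ 2, by positivity, fun n k => ?_⟩
  have hprod : N n * N k ≤ A ^ (n + k) * (M n * M k) := by
    calc N n * N k ≤ (A ^ n * M n) * (A ^ k * M k) :=
          mul_le_mul (hNM n) (hNM k) (hN_nonneg k) (mul_nonneg (by positivity) (hM n))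
      _ = A ^ (n + k) * (M n * M k) := by ring
  calc M (n + k) ≤ A ^ (n + k) * N (n + k) := hMN _
    _ ≤ A ^ (n + k) * (B ^ (n + k) * (N n * N k)) := by
          gcongr
          exact (hmg n k).trans_eq (mul_assoc _ _ _)
    _ ≤ A ^ (n + k) * (B ^ (n + k) * (A ^ (n + k) * (M n * M k))) := by gcongr
    _ = (B * A ^ 2) ^ (n + k) * M n * M k := by ring

end Equivalence

theorem Nat.factorial_mul_factorial_le_factorial_add (n k : ℕ) : n ! * k ! ≤ (n + k)! :=
  Nat.le_of_dvd (factorial_pos _) (factorial_mul_factorial_dvd_factorial_add n k)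

theorem Nat.factorial_add_le_two_pow_mul (n k : ℕ) : (n + k)! ≤ 2 ^ (n + k) * n ! * k ! := by
  rw [← add_choose_mul_factorial_mul_factorial n k]
  gcongr
  exact choose_le_two_pow _ _

theorem starProperty_factorial : StarProperty fun n => (n ! : ℝ) :=
  ⟨1, one_pos, fun n k => by
    simp only [one_pow, one_mul]
    exact_mod_cast factorial_mul_factorial_le_factorial_add n k⟩

theorem moderateGrowth_factorial : ModerateGrowth fun n => (n ! : ℝ) :=
  ⟨2, two_pos, fun n k => by
    simp only
    exact_mod_cast factorial_add_le_two_pow_mul n k⟩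

theorem Nat.factorial_le_two_pow_mul_factorial_pred (n : ℕ) : n ! ≤ 2 ^ n * (n - 1)! := by
  rcases n with _ | n
  · simp
  · rw [factorial_succ, Nat.add_sub_cancel]
    gcongr
    exact Nat.lt_two_pow_self.le

theorem stmt_10 (M : ℕ → ℝ)
    (hM : ∀ n, M n = if Even n then ((Nat.factorial n : ℕ) : ℝ)
                     else ((Nat.factorial (n - 1) : ℕ) : ℝ)) :
    (∃ b > 0, ∀ n k : ℕ, b ^ (n + k) * M n * M k ≤ M (n + k)) ∧
    (∃ B > 0, ∀ n k : ℕ, M (n + k) ≤ B ^ (n + k) * M n * M k) ∧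
    ¬ (∀ n ≥ 1, (M n) ^ 2 ≤ M (n - 1) * M (n + 1)) := by
  have hM_nonneg : ∀ m, 0 ≤ M m := fun m => by rw [hM m]; split_ifs <;> positivity
  have hle : ∀ m, M m ≤ (2 : ℝ) ^ m * m ! := fun m => by
    rw [hM m]
    split_ifs
    · exact le_mul_of_one_le_left (by positivity) (one_le_pow₀ one_le_two)
    · exact_mod_cast (factorial_le (sub_le m 1)).trans (Nat.le_mul_of_pos_left _ (by positivity))
  have hge : ∀ m, (m ! : ℝ) ≤ 2 ^ m * M m := fun m => by
    rw [hM m]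
    split_ifs
    · exact le_mul_of_one_le_left (by positivity) (one_le_pow₀ one_le_two)
    · exact_mod_cast factorial_le_two_pow_mul_factorial_pred m
  have not_logConvex : ¬ LogConvex M := fun h => by
    have h2 := h 2 (by norm_num)
    rw [hM 2, hM 1, hM 3] at h2
    norm_num [factorial, Nat.even_iff] at h2
  exact ⟨starProperty_factorial.of_equiv two_pos hM_nonneg hle hge,
    moderateGrowth_factorial.of_equiv two_pos hM_nonneg hle hge, not_logConvex⟩
end

section
/- Let (M_n) be an (mg) sequence with M_0 = 1 and let (m(n)) be an (M_n)-sequence of order s ≥ 0 with constants 𝔞, 𝔄. If a formal power series φ(z) = Σ φ_n z^n over ℂ satisfies |φ_n| ≤ C D^n for all n (some C, D > 0), then there exist H, D' > 0 such that for every β ∈ ℕ₀ the coefficients of the β-th m-derivative satisfy |(∂_m^β φ)_n| ≤ C H^β (M_β)^s (D')^n for all n ≥ 0. (One may take H = D 𝔄 B^s, D' = D 𝔄 B^s / 𝔞, where B is the mg constant.) -/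
theorem stmt_13 (M : ℕ → ℝ) (hpos : ∀ n, 0 < M n) (h0 : M 0 = 1)
    (B : ℝ) (hB : 0 < B)
    (hmg : ∀ n k : ℕ, M (n + k) ≤ B ^ (n + k) * M n * M k)
    (s : ℝ) (hs : 0 ≤ s)
    (m : ℕ → ℝ) (hmpos : ∀ n, 0 < m n)
    (a A : ℝ) (ha : 0 < a) (hA : 0 < A)
    (hseq : ∀ n : ℕ, a ^ n * (M n) ^ s ≤ m n ∧ m n ≤ A ^ n * (M n) ^ s)
    (φ : ℕ → ℂ) (C D : ℝ) (hC : 0 < C) (hD : 0 < D)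
    (hφ : ∀ n : ℕ, ‖φ n‖ ≤ C * D ^ n) :
    ∃ H > (0 : ℝ), ∃ D' > (0 : ℝ), ∀ β n : ℕ,
      ‖φ (n + β)‖ * (m (n + β) / m n) ≤
        C * H ^ β * (M β) ^ s * D' ^ n := by
  have hBs0 : 0 < B ^ s := Real.rpow_pos_of_pos hB s
  refine ⟨D * A * B ^ s, by positivity, (D * A * B ^ s) / a, by positivity, ?_⟩
  intro β n
  have hMs : ∀ k, (0:ℝ) < (M k) ^ s := fun k => Real.rpow_pos_of_pos (hpos k) s
  have hpowBs : (B ^ (n + β) : ℝ) ^ s = (B ^ s) ^ (n + β) := by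
    rw [← Real.rpow_natCast B (n + β), ← Real.rpow_mul hB.le,
      mul_comm, Real.rpow_mul hB.le, Real.rpow_natCast]
  have hM : (M (n + β)) ^ s ≤ (B ^ s) ^ (n + β) * (M n) ^ s * (M β) ^ s := by
    have h1 : (M (n + β)) ^ s ≤ (B ^ (n + β) * M n * M β) ^ s :=
      Real.rpow_le_rpow (hpos _).le (hmg n β) hs
    calc (M (n + β)) ^ s ≤ (B ^ (n + β) * M n * M β) ^ s := h1
      _ = (B ^ (n + β) : ℝ) ^ s * (M n) ^ s * (M β) ^ s := by
          rw [Real.mul_rpow (mul_nonneg (by positivity) (hpos n).le) (hpos β).le,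
            Real.mul_rpow (by positivity) (hpos n).le]
      _ = (B ^ s) ^ (n + β) * (M n) ^ s * (M β) ^ s := by rw [hpowBs]
  have hratio : m (n + β) / m n ≤
      (A ^ (n + β) * ((B ^ s) ^ (n + β) * (M n) ^ s * (M β) ^ s)) / (a ^ n * (M n) ^ s) := by
    apply div_le_div₀ (mul_nonneg (by positivity) (mul_nonneg (mul_nonneg (by positivity) (hMs n).le) (hMs β).le)) ?_ (mul_pos (pow_pos ha n) (hMs n)) (hseq n).1
    calc m (n + β) ≤ A ^ (n + β) * (M (n + β)) ^ s := (hseq (n + β)).2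
      _ ≤ A ^ (n + β) * ((B ^ s) ^ (n + β) * (M n) ^ s * (M β) ^ s) := by
          exact mul_le_mul_of_nonneg_left hM (by positivity)
  have hmain : ‖φ (n + β)‖ * (m (n + β) / m n) ≤
      (C * D ^ (n + β)) *
        ((A ^ (n + β) * ((B ^ s) ^ (n + β) * (M n) ^ s * (M β) ^ s)) / (a ^ n * (M n) ^ s)) :=
    mul_le_mul (hφ (n + β)) hratio (div_pos (hmpos _) (hmpos _)).le (by positivity)
  refine hmain.trans_eq ?_
  have hMn := (hMs n).ne'
  rw [pow_add D, pow_add A, pow_add (B ^ s), div_pow, mul_pow, mul_pow]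
  field_simp
  ring
end

section
/- Let (M_n) be an increasing sequence of positive reals with M_0 = 1 satisfying (⋆) with constant b ≤ 1, and let s₀, r ≥ 0. Then there exist A, B > 0 such that for every ι ∈ ℕ, Σ_{n=0}^{ι-1} (M_{ι-n-1})^r (M_n)^{r+s₀} ≤ A B^ι (M_ι)^{r+s₀}. -/
theorem stmt_16 (M : ℕ → ℝ) (hpos : ∀ n, 0 < M n) (h0 : M 0 = 1)
    (hmono : ∀ n : ℕ, M n ≤ M (n + 1))
    (b : ℝ) (hb : 0 < b) (hb1 : b ≤ 1)
    (hstar : ∀ n k : ℕ, b ^ (n + k) * M n * M k ≤ M (n + k))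
    (s₀ r : ℝ) (hs₀ : 0 ≤ s₀) (hr : 0 ≤ r) :
    ∃ A > (0 : ℝ), ∃ B > (0 : ℝ), ∀ ι : ℕ,
      (∑ n ∈ Finset.range ι, (M (ι - n - 1)) ^ r * (M n) ^ (r + s₀)) ≤
        A * B ^ ι * (M ι) ^ (r + s₀) := by
  have hM : Monotone M := monotone_nat_of_le_succ hmono
  set c := b ^ r with hc
  have hc0 : 0 < c := Real.rpow_pos_of_pos hb r
  refine ⟨c, hc0, 2 / c, by positivity, fun ι => ?_⟩
  rcases Nat.eq_zero_or_pos ι with rfl | hι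
  · simp
    positivity
  obtain ⟨j, rfl⟩ : ∃ j, ι = j + 1 := ⟨ι - 1, by omega⟩
  have key : ∀ n ∈ Finset.range (j + 1),
      M ((j + 1) - n - 1) ^ r * M n ^ (r + s₀) ≤ (c⁻¹) ^ (j) * M (j + 1) ^ (r + s₀) := by
    intro n hn
    rw [Finset.mem_range] at hn
    have hsum : ((j + 1) - n - 1) + n = j := by omega
    have hb' : (0:ℝ) < b ^ (j) := pow_pos hb _
    have h1 : M ((j + 1) - n - 1) * M n ≤ b⁻¹ ^ (j) * M (j + 1) := by
      have h := hstar ((j + 1) - n - 1) n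
      rw [hsum] at h
      have h2 : M (j) ≤ M (j + 1) := hM (by omega)
      rw [inv_pow, ← div_eq_inv_mul, le_div_iff₀ hb']
      calc M ((j + 1) - n - 1) * M n * b ^ (j)
          = b ^ (j) * M ((j + 1) - n - 1) * M n := by ring
        _ ≤ M (j) := h
        _ ≤ M (j + 1) := h2
    have hrw : M ((j + 1) - n - 1) ^ r * M n ^ (r + s₀)
        = (M ((j + 1) - n - 1) * M n) ^ r * M n ^ s₀ := by
      rw [Real.mul_rpow (hpos _).le (hpos _).le, Real.rpow_add (hpos n)]
      ring
    rw [hrw]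
    have hA : (M ((j + 1) - n - 1) * M n) ^ r ≤ (b⁻¹ ^ (j) * M (j + 1)) ^ r :=
      Real.rpow_le_rpow (mul_pos (hpos _) (hpos _)).le h1 hr
    have hB : M n ^ s₀ ≤ M (j + 1) ^ s₀ :=
      Real.rpow_le_rpow (hpos n).le (hM hn.le) hs₀
    have hrw2 : (b⁻¹ ^ (j) * M (j + 1)) ^ r * M (j + 1) ^ s₀
        = (c⁻¹) ^ (j) * M (j + 1) ^ (r + s₀) := by
      rw [Real.mul_rpow (by positivity) (hpos _).le, Real.rpow_add (hpos (j + 1))]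
      have : ((b⁻¹ : ℝ) ^ (j)) ^ r = c⁻¹ ^ (j) := by
        rw [← Real.rpow_natCast b⁻¹ (j), ← Real.rpow_natCast c⁻¹ (j),
          ← Real.rpow_mul (by positivity), mul_comm, Real.rpow_mul (by positivity),
          Real.inv_rpow hb.le]
      rw [this]; ring
    calc (M ((j + 1) - n - 1) * M n) ^ r * M n ^ s₀
        ≤ (b⁻¹ ^ (j) * M (j + 1)) ^ r * M (j + 1) ^ s₀ := by
          exact mul_le_mul hA hB (Real.rpow_nonneg (hpos _).le _)
            (Real.rpow_nonneg (mul_nonneg (by positivity) (hpos _).le) _)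
      _ = (c⁻¹) ^ (j) * M (j + 1) ^ (r + s₀) := hrw2
  calc (∑ n ∈ Finset.range (j + 1), M ((j + 1) - n - 1) ^ r * M n ^ (r + s₀))
      ≤ (Finset.range (j + 1)).card • ((c⁻¹) ^ (j) * M (j + 1) ^ (r + s₀)) :=
        Finset.sum_le_card_nsmul _ _ _ key
    _ = ((j + 1) : ℝ) * ((c⁻¹) ^ (j) * M (j + 1) ^ (r + s₀)) := by
        rw [Finset.card_range, nsmul_eq_mul]; push_cast; ring
    _ ≤ c * (2 / c) ^ (j + 1) * M (j + 1) ^ (r + s₀) := by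
        have hle2 : ((j + 1) : ℝ) ≤ 2 ^ (j + 1) := by
          exact_mod_cast (Nat.lt_two_pow_self (n := j + 1)).le
        have hpow : c * (2 / c) ^ (j + 1) = 2 ^ (j + 1) * (c⁻¹) ^ (j) := by
          rw [div_pow, inv_pow]
          field_simp
          ring
        rw [hpow]
        have : ((j + 1) : ℝ) * (c⁻¹) ^ (j) ≤ 2 ^ (j + 1) * (c⁻¹) ^ (j) := by
          apply mul_le_mul_of_nonneg_right hle2 (by positivity)
        nlinarith [Real.rpow_pos_of_pos (hpos (j + 1)) (r + s₀), this,
          mul_le_mul_of_nonneg_right this (Real.rpow_pos_of_pos (hpos (j + 1)) (r + s₀)).le]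
end
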